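/- arXiv:1805.12072 — 4 statements merged into one kernel-verified Lean document; each statement's English description precedes it below -/
import Mathlib

section
/- Let A = √i ∈ ℂ (A² = i). For any nonzero integer n with σ = n/|n|, we have i · (A^{-2σ} Σ_{k=0}^{|n|-1} (-A^{-4σ})^k + 1) = n + i. That is, the conductance of the elementary tangle [n¹] (n classical crossings plus one virtual crossing) equals n + i. -/
/-! From `A² = i` we get `A^{-2σ} = (-i)^σ` and `A^{-4σ} = (-1)^σ = -1` for `σ = ±1`. Hence every
term of the geometric sum is `1`, the sum is `|n|`, and `(-i)^σ · |n| = -i · σ|n| = -i · n`. -/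

open Complex

theorem zpow_neg_two_mul_of_sq_eq_I {A : ℂ} (hA : A ^ 2 = I) (m : ℤ) :
    A ^ (-2 * m) = (-I) ^ m := by
  rw [show -2 * m = 2 * -m by ring, zpow_mul, zpow_ofNat, hA, zpow_neg, ← inv_zpow, inv_I]

theorem zpow_neg_four_mul_of_sq_eq_I {A : ℂ} (hA : A ^ 2 = I) (m : ℤ) :
    A ^ (-(4 * m)) = (-1) ^ m := by
  rw [show -(4 * m) = -2 * (2 * m) by ring, zpow_neg_two_mul_of_sq_eq_I hA, zpow_mul]
  norm_num

theorem neg_one_zpow_sign {α : Type*} [DivisionRing α] {n : ℤ} (hn : n ≠ 0) :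
    (-1 : α) ^ n.sign = -1 := by
  rcases hn.lt_or_gt with h | h
  · simp [Int.sign_eq_neg_one_of_neg h]
  · simp [Int.sign_eq_one_of_pos h]

theorem neg_I_zpow_sign_mul_natAbs {n : ℤ} (hn : n ≠ 0) :
    (-I) ^ n.sign * n.natAbs = -I * n := by
  rw [Nat.cast_natAbs]
  rcases hn.lt_or_gt with h | h
  · simp [Int.sign_eq_neg_one_of_neg h, abs_of_neg h]
  · simp [Int.sign_eq_one_of_pos h, abs_of_pos h]

open Complex in
theorem conductance_elementary_virtual_general (A : ℂ) (hA : A ^ 2 = I) (n : ℤ) :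
    I * (A ^ (-2 * n.sign) *
      (∑ k ∈ Finset.range n.natAbs, (-A ^ (-(4 * n.sign))) ^ k) + 1) = (n : ℂ) + I := by
  rcases eq_or_ne n 0 with rfl | hn
  · simp
  rw [zpow_neg_two_mul_of_sq_eq_I hA, zpow_neg_four_mul_of_sq_eq_I hA, neg_one_zpow_sign hn,
    neg_neg]
  simp only [one_pow, Finset.sum_const, Finset.card_range, nsmul_one]
  rw [neg_I_zpow_sign_mul_natAbs hn]
  linear_combination (-(n : ℂ)) * I_sq

open Complex in
/-- The conductance of the elementary tangle `[n¹]` (n classical crossings plus one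
virtual crossing) equals `n + i`: with `A² = i` and `σ = n.sign`,
`i * (A^(-2σ) * ∑_{k=0}^{|n|-1} (-A^(-4σ))^k + 1) = n + i`. -/
theorem conductance_elementary_virtual (A : ℂ) (hA : A ^ 2 = I) (n : ℤ) (hn : n ≠ 0) :
    I * (A ^ (-2 * n.sign) *
      (∑ k ∈ Finset.range n.natAbs, (-A ^ (-(4 * n.sign))) ^ k) + 1) = (n : ℂ) + I :=
  conductance_elementary_virtual_general A hA n
end

section
/- Let a, b, c, d, e, f ∈ ℂ with b + c ≠ 0, e + f ≠ 0, b·e + c·f ≠ 0, and suppose c = 0 or f = 0. Define the 'sum' coefficients F = ae + af + bd + cd, G = be + cf, H = bf + ce (these arise from adding tangles with bracket coefficients (a,b,c) and (d,e,f) at A = √i, where the loop value -A²-A⁻² vanishes). Then i·(F + H)/(G + H) = i·(a + c)/(b + c) + i·(d + f)/(e + f). That is, conductance is additive under horizontal tangle addition when one tangle has vanishing virtual coefficient. -/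
/-!
At `A = √i` the denominator of the summed conductance factors as `G + H = (b + c)(e + f)`,
while the numerator is `F + H = (a + c)(e + f) + (d + f)(b + c) - 2cf`. Hence the conductance
of a horizontal sum is the sum of the conductances up to a correction proportional to the product
`cf` of the virtual coefficients, which vanishes as soon as one of them does.
-/

open Complex

noncomputable def conductance (f g h : ℂ) : ℂ := I * (f + h) / (g + h)

theorem conductance_add_horizontal (a b c d e f : ℂ) (hbc : b + c ≠ 0) (hef : e + f ≠ 0) :
    conductance (a * e + a * f + b * d + c * d) (b * e + c * f) (b * f + c * e) =
      conductance a b c + conductance d e f - 2 * I * (c * f) / ((b + c) * (e + f)) := by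
  have hden : b * e + c * f + (b * f + c * e) = (b + c) * (e + f) := by ring
  have hnum : a * e + a * f + b * d + c * d + (b * f + c * e) =
      (a + c) * (e + f) + (d + f) * (b + c) - 2 * (c * f) := by ring
  rw [conductance, hden, hnum, conductance, conductance]
  field_simp

theorem conductance_additive_general (a b c d e f : ℂ)
    (h1 : b + c ≠ 0) (h2 : e + f ≠ 0)
    (h4 : c = 0 ∨ f = 0)
    (F G H : ℂ)
    (hF : F = a * e + a * f + b * d + c * d)
    (hG : G = b * e + c * f)
    (hH : H = b * f + c * e) :
    I * (F + H) / (G + H) = I * (a + c) / (b + c) + I * (d + f) / (e + f) := by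
  have hcf : c * f = 0 := mul_eq_zero.mpr h4
  subst hF hG hH
  simpa [conductance, hcf] using conductance_add_horizontal a b c d e f h1 h2

open Complex in
/-- Additivity of the conductance under horizontal tangle addition, when one tangle
has vanishing virtual coefficient. -/
theorem conductance_additive (a b c d e f : ℂ)
    (h1 : b + c ≠ 0) (h2 : e + f ≠ 0) (h3 : b * e + c * f ≠ 0)
    (h4 : c = 0 ∨ f = 0)
    (F G H : ℂ)
    (hF : F = a * e + a * f + b * d + c * d)
    (hG : G = b * e + c * f)
    (hH : H = b * f + c * e) :
    I * (F + H) / (G + H) = I * (a + c) / (b + c) + I * (d + f) / (e + f) :=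
  conductance_additive_general a b c d e f h1 h2 h4 F G H hF hG hH
end

section
/- Let a, b, c, d, e, f ∈ ℂ with a + c ≠ 0, d + f ≠ 0, and suppose c = 0 or f = 0. Define the 'vertical sum' coefficients F = ad + cf, G = ae + bd + bf + ce, H = af + cd. Assume the denominators (a+c)(d+f) and G + H are nonzero and that C(T) = i(a+c)/(b+c), C(S) = i(d+f)/(e+f) are nonzero. Then i·(F + H)/(G + H) = 1/(1/C(T) + 1/C(S)). That is, conductance combines harmonically under vertical tangle composition when one tangle has vanishing virtual coefficient. -/
open Complex in
/-- Conductance combines harmonically under vertical tangle composition, when one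
tangle has vanishing virtual coefficient. -/
theorem conductance_vertical (a b c d e f : ℂ)
    (h1 : a + c ≠ 0) (h2 : d + f ≠ 0)
    (h4 : c = 0 ∨ f = 0)
    (F G H : ℂ)
    (hF : F = a * d + c * f)
    (hG : G = a * e + b * d + b * f + c * e)
    (hH : H = a * f + c * d)
    (h5 : (a + c) * (d + f) ≠ 0) (h6 : G + H ≠ 0)
    (CT CS : ℂ)
    (hCT : CT = I * (a + c) / (b + c)) (hCS : CS = I * (d + f) / (e + f))
    (hCT0 : CT ≠ 0) (hCS0 : CS ≠ 0) :
    I * (F + H) / (G + H) = 1 / (1 / CT + 1 / CS) := by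
  have hb : b + c ≠ 0 := by
    intro h; apply hCT0; rw [hCT, h, div_zero]
  have he : e + f ≠ 0 := by
    intro h; apply hCS0; rw [hCS, h, div_zero]
  have hI : (I : ℂ) ≠ 0 := I_ne_zero
  have hFH : I * (F + H) ≠ 0 := by
    apply mul_ne_zero hI
    rw [hF, hH]
    intro hc; apply h5; linear_combination hc
  have key : 1 / CT + 1 / CS = (G + H) / (I * (F + H)) := by
    rw [hCT, hCS, one_div_div, one_div_div]
    rw [div_add_div _ _ (mul_ne_zero hI h1) (mul_ne_zero hI h2)]
    rw [div_eq_div_iff (mul_ne_zero (mul_ne_zero hI h1) (mul_ne_zero hI h2)) hFH]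
    rw [hF, hG, hH]
    rcases h4 with h | h <;> subst h <;> ring
  rw [key, one_div_div, mul_div_assoc]
end

section
/- For any nonzero integer n and A ∈ ℂ with A² = i: the conductance of the vertical classical tangle 1/[n⁰], defined as i·f/(g) where f = A^{-n}, g = A^{-n+2σ(n)} Σ_{k=0}^{|n|-1} (-A^{4σ(n)})^k, equals 1/n. -/
/-!
Since `A ^ 2 = I`, we have `A ^ 4 = -1`, so every summand `(-A ^ (4σ)) ^ k` equals `1` and the
sum is `|n|`, while `A ^ (2σ) = I ^ σ = σ I`. Hence the denominator is `A ^ (-n) · σ I · |n| =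
I · A ^ (-n) · n`, and the quotient is `1 / n`.
-/

open Complex

theorem Int.sign_eq_one_or_neg_one_of_ne_zero {n : ℤ} (hn : n ≠ 0) :
    n.sign = 1 ∨ n.sign = -1 :=
  hn.lt_or_gt.symm.imp Int.sign_eq_one_of_pos Int.sign_eq_neg_one_of_neg

section SqEqI

variable {A : ℂ}

theorem zpow_four_of_sq_eq_I (hA : A ^ 2 = I) : A ^ (4 : ℤ) = -1 := by
  rw [show (4 : ℤ) = (2 : ℕ) * (2 : ℕ) from rfl, zpow_mul, zpow_natCast, zpow_natCast, hA, I_sq]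

theorem zpow_two_mul_sign_of_sq_eq_I (hA : A ^ 2 = I) {n : ℤ} (hn : n ≠ 0) :
    A ^ (2 * n.sign) = n.sign * I := by
  rw [zpow_mul, show A ^ (2 : ℤ) = I from mod_cast hA]
  rcases Int.sign_eq_one_or_neg_one_of_ne_zero hn with h | h <;> simp [h]

theorem neg_zpow_four_mul_sign_of_sq_eq_I (hA : A ^ 2 = I) {n : ℤ} (hn : n ≠ 0) :
    -A ^ (4 * n.sign) = 1 := by
  rw [zpow_mul, zpow_four_of_sq_eq_I hA]
  rcases Int.sign_eq_one_or_neg_one_of_ne_zero hn with h | h <;> simp [h]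

end SqEqI

/-- The conductance of the vertical classical tangle `1/[n⁰]` equals `1/n`:
with `A² = i`, `f = A^(-n)`, `g = A^(-n+2σ) ∑_{k=0}^{|n|-1} (-A^(4σ))^k`,
we have `i * f / g = 1/n`. -/
theorem conductance_vertical_classical (A : ℂ) (hA : A ^ 2 = I) (n : ℤ) (hn : n ≠ 0) :
    I * (A ^ (-n)) /
      (A ^ (-n + 2 * n.sign) * ∑ k ∈ Finset.range n.natAbs, (-A ^ (4 * n.sign)) ^ k) =
      1 / (n : ℂ) := by
  have hA0 : A ≠ 0 := by rintro rfl; simp [eq_comm] at hA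
  have hσ : (n.sign : ℂ) * n.natAbs = n := by
    rw [← Int.cast_natCast, ← Int.cast_mul, Int.sign_mul_natAbs]
  have hg : A ^ (-n + 2 * n.sign) * ∑ k ∈ Finset.range n.natAbs, (-A ^ (4 * n.sign)) ^ k
      = I * A ^ (-n) * n := by
    rw [zpow_add₀ hA0, zpow_two_mul_sign_of_sq_eq_I hA hn,
      neg_zpow_four_mul_sign_of_sq_eq_I hA hn]
    simp only [one_pow, Finset.sum_const, Finset.card_range, nsmul_eq_mul, mul_one]
    linear_combination (I * A ^ (-n)) * hσ
  rw [hg, div_mul_eq_div_div, div_self (mul_ne_zero I_ne_zero (zpow_ne_zero _ hA0))]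
end
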